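/- arXiv:2006.13930 — 6 statements merged into one kernel-verified Lean document; each statement's English description precedes it below -/
import Mathlib

section
/- For all complex numbers z_1, ..., z_N and every integer H with 1 ≤ H ≤ N, we have |∑_{n=1}^N z_n|² ≤ ((N+H-1)/H²) · ( H·∑_{n=1}^N |z_n|² + 2·∑_{h=1}^{H-1} (H-h)·Re ∑_{n=1}^{N-h} z_{n+h}·conj(z_n) ). -/
/-!
Extend `z` by zero to `ℤ` and average the sum over the `N + H - 1` windows of length `H` meeting
`[1, N]`: `H • ∑ z = ∑ₘ ∑_{h < H} z (m + h)`. Cauchy–Schwarz over the windows gives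
`H² ‖∑ z‖² ≤ (N + H - 1) ∑ₘ ‖∑_{h < H} z (m + h)‖²`; expanding each square and summing over `m`
turns the cross terms `z (m + i) conj (z (m + j))`, `j < i`, into the correlation at lag
`d = i - j`, and exactly `H - d` pairs `j < i < H` have lag `d`.
-/

open Finset ComplexConjugate RCLike

lemma Int.sum_Icc_natCast {M : Type*} [AddCommMonoid M] (g : ℤ → M) (a b : ℕ) :
    ∑ n ∈ Icc (a : ℤ) b, g n = ∑ n ∈ Icc a b, g n := by
  have h : (Icc a b).map Nat.castEmbedding = Icc (a : ℤ) b := by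
    rw [← coe_inj, coe_map, coe_Icc, coe_Icc]
    exact Nat.image_cast_int_Icc a b
  rw [← h, sum_map]
  rfl

lemma norm_sum_sq_le_card_mul_sum_norm_sq {ι E : Type*} [SeminormedAddCommGroup E]
    (s : Finset ι) (x : ι → E) : ‖∑ i ∈ s, x i‖ ^ 2 ≤ #s * ∑ i ∈ s, ‖x i‖ ^ 2 :=
  (pow_le_pow_left₀ (norm_nonneg _) (norm_sum_le s x) 2).trans sq_sum_le_card_mul_sum_sq

lemma sum_range_sum_range_sub {M : Type*} [AddCommMonoid M] (g : ℕ → M) (H : ℕ) :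
    ∑ i ∈ range H, ∑ j ∈ range i, g (i - j) = ∑ d ∈ Icc 1 (H - 1), (H - d) • g d := by
  have h : ∀ d, (H - d) • g d = ∑ _j ∈ range (H - d), g d := by simp
  simp_rw [h, sum_sigma']
  refine sum_nbij' (fun p => ⟨p.1 - p.2, p.2⟩) (fun p => ⟨p.1 + p.2, p.2⟩) ?_ ?_ ?_ ?_ ?_ <;>
    rintro ⟨i, j⟩ <;> simp <;> omega

section Shift

variable {M : Type*} [AddCommMonoid M] {g : ℤ → M} {a b : ℤ}

lemma sum_Icc_comp_add_of_eq_zero (hg : ∀ n ∉ Icc a b, g n = 0) {c d k : ℤ} (hc : c + k ≤ a)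
    (hd : b ≤ d + k) : ∑ n ∈ Icc c d, g (n + k) = ∑ n ∈ Icc a b, g n := by
  calc ∑ n ∈ Icc c d, g (n + k) = ∑ n ∈ Icc (c + k) (d + k), g n := by
        rw [← map_add_right_Icc, sum_map]
        rfl
    _ = ∑ n ∈ Icc a b, g n := (sum_subset (Icc_subset_Icc hc hd) fun n _ hn => hg n hn).symm

lemma sum_Icc_sum_range_add (hg : ∀ n ∉ Icc a b, g n = 0) (H : ℕ) :
    ∑ m ∈ Icc (a + 1 - H) b, ∑ h ∈ range H, g (m + h) = H • ∑ n ∈ Icc a b, g n := by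
  calc _ = ∑ h ∈ range H, ∑ n ∈ Icc a b, g n := by
        rw [sum_comm]
        refine sum_congr rfl fun h hh => sum_Icc_comp_add_of_eq_zero hg ?_ (by omega)
        simp only [mem_range] at hh
        omega
    _ = _ := by rw [sum_const, card_range]

end Shift

section RCLike

variable {𝕜 : Type*} [RCLike 𝕜]

lemma norm_sum_range_sq (x : ℕ → 𝕜) (H : ℕ) :
    ‖∑ i ∈ range H, x i‖ ^ 2 =
      ∑ i ∈ range H, ‖x i‖ ^ 2 + 2 * re (∑ i ∈ range H, ∑ j ∈ range i, x i * conj (x j)) := by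
  induction H with
  | zero => simp
  | succ H ih =>
    rw [sum_range_succ, add_comm, ← normSq_eq_def', normSq_add, normSq_eq_def',
      normSq_eq_def', ih, sum_range_succ, sum_range_succ, map_sum (starRingEnd 𝕜), mul_sum, map_add]
    ring

variable {f : ℤ → 𝕜} {a b : ℤ}

lemma sum_Icc_sum_range_sum_range_mul_conj (hf : ∀ n ∉ Icc a b, f n = 0) (H : ℕ) :
    ∑ m ∈ Icc (a + 1 - H) b, ∑ i ∈ range H, ∑ j ∈ range i, f (m + i) * conj (f (m + j)) =
      ∑ i ∈ range H, ∑ j ∈ range i, ∑ n ∈ Icc a b, f (n + (i - j : ℕ)) * conj (f n) := by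
  rw [sum_comm]
  refine sum_congr rfl fun i hi => ?_
  rw [sum_comm]
  refine sum_congr rfl fun j hj => ?_
  simp only [mem_range] at hi hj
  have hg : ∀ n ∉ Icc a b, f (n + (i - j : ℕ)) * conj (f n) = 0 := fun n hn => by simp [hf n hn]
  refine (sum_congr rfl fun m _ => ?_).trans (sum_Icc_comp_add_of_eq_zero hg (k := j) ?_ ?_)
  · rw [Nat.cast_sub hj.le, add_add_sub_cancel]
  all_goals omega

theorem van_der_corput_Icc (hf : ∀ n ∉ Icc a b, f n = 0) (H : ℕ) :
    (H : ℝ) ^ 2 * ‖∑ n ∈ Icc a b, f n‖ ^ 2 ≤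
      #(Icc (a + 1 - H) b) * (H * ∑ n ∈ Icc a b, ‖f n‖ ^ 2 +
        2 * ∑ d ∈ Icc 1 (H - 1), ((H : ℝ) - d) * re (∑ n ∈ Icc a b, f (n + d) * conj (f n))) := by
  set T := Icc (a + 1 - H) b
  have hwindow : (H : 𝕜) * ∑ n ∈ Icc a b, f n = ∑ m ∈ T, ∑ h ∈ range H, f (m + h) := by
    rw [sum_Icc_sum_range_add hf, nsmul_eq_mul]
  have hnorm : ∀ n ∉ Icc a b, ‖f n‖ ^ 2 = 0 := fun n hn => by simp [hf n hn]
  have hcoeff : ∀ d ∈ Icc 1 (H - 1), re ((H - d) • ∑ n ∈ Icc a b, f (n + d) * conj (f n)) =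
      ((H : ℝ) - d) * re (∑ n ∈ Icc a b, f (n + d) * conj (f n)) := by
    intro d hd
    simp only [mem_Icc] at hd
    rw [map_nsmul, nsmul_eq_mul, Nat.cast_sub (by omega)]
  calc (H : ℝ) ^ 2 * ‖∑ n ∈ Icc a b, f n‖ ^ 2 = ‖∑ m ∈ T, ∑ h ∈ range H, f (m + h)‖ ^ 2 := by
        rw [← hwindow, norm_mul, RCLike.norm_natCast, mul_pow]
    _ ≤ #T * ∑ m ∈ T, ‖∑ h ∈ range H, f (m + h)‖ ^ 2 := norm_sum_sq_le_card_mul_sum_norm_sq _ _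
    _ = _ := by
        rw [sum_congr rfl fun m _ => norm_sum_range_sq (fun h => f (m + h)) H, sum_add_distrib,
          ← mul_sum, ← map_sum, sum_Icc_sum_range_add hnorm,
          sum_Icc_sum_range_sum_range_mul_conj hf,
          sum_range_sum_range_sub (fun d => ∑ n ∈ Icc a b, f (n + d) * conj (f n)), map_sum,
          sum_congr rfl hcoeff, nsmul_eq_mul]

end RCLike

def zeroExtend {M : Type*} [Zero M] (z : ℕ → M) (N : ℕ) : ℤ → M :=
  fun n => if 1 ≤ n ∧ n ≤ N then z n.toNat else 0

section ZeroExtend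

variable {M : Type*} (z : ℕ → M) (N : ℕ)

lemma zeroExtend_of_notMem [Zero M] : ∀ n ∉ Icc 1 (N : ℤ), zeroExtend z N n = 0 :=
  fun _ hn => if_neg (by simpa using hn)

lemma zeroExtend_natCast [Zero M] {n : ℕ} (hn : n ∈ Icc 1 N) : zeroExtend z N n = z n := by
  simp only [mem_Icc] at hn
  simp only [zeroExtend, Int.toNat_natCast]
  exact if_pos (by omega)

lemma sum_Icc_comp_zeroExtend [Zero M] {R : Type*} [AddCommMonoid R] (g : M → R) :
    ∑ n ∈ Icc (1 : ℤ) N, g (zeroExtend z N n) = ∑ n ∈ Icc 1 N, g (z n) := by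
  rw [← Nat.cast_one (R := ℤ), Int.sum_Icc_natCast]
  exact sum_congr rfl fun n hn => by rw [zeroExtend_natCast z N hn]

lemma sum_Icc_zeroExtend_mul_conj [CommSemiring M] [StarRing M] (h : ℕ) :
    ∑ n ∈ Icc (1 : ℤ) N, zeroExtend z N (n + h) * conj (zeroExtend z N n) =
      ∑ n ∈ Icc 1 (N - h), z (n + h) * conj (z n) := by
  rw [← sum_subset (Icc_subset_Icc le_rfl (by omega : ((N - h : ℕ) : ℤ) ≤ N)),
    ← Nat.cast_one (R := ℤ), Int.sum_Icc_natCast]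
  · refine sum_congr rfl fun n hn => ?_
    simp only [mem_Icc] at hn
    rw [← Nat.cast_add, zeroExtend_natCast z N (by simp; omega),
      zeroExtend_natCast z N (by simp; omega)]
  · intro n hnN hn
    simp only [mem_Icc] at hnN hn
    rw [zeroExtend_of_notMem z N (n + h) (by simp; omega), zero_mul]

end ZeroExtend

theorem stmt0_general (N H : ℕ) (hH : 1 ≤ H) (z : ℕ → ℂ) :
    ‖∑ n ∈ Finset.Icc 1 N, z n‖ ^ 2 ≤
      (((N : ℝ) + H - 1) / H ^ 2) *
        (H * ∑ n ∈ Finset.Icc 1 N, ‖z n‖ ^ 2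
          + 2 * ∑ h ∈ Finset.Icc 1 (H - 1),
              ((H : ℝ) - h) *
                (∑ n ∈ Finset.Icc 1 (N - h), z (n + h) * (starRingEnd ℂ) (z n)).re) := by
  have hcard : (#(Icc ((1 : ℤ) + 1 - H) N) : ℝ) = N + H - 1 := by
    rw [Int.card_Icc, show (N + 1 - (1 + 1 - H) : ℤ).toNat = N + H - 1 by omega,
      Nat.cast_sub (by omega)]
    push_cast
    ring
  have hsum : ∑ n ∈ Icc (1 : ℤ) N, zeroExtend z N n = ∑ n ∈ Icc 1 N, z n :=
    sum_Icc_comp_zeroExtend z N id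
  have key := van_der_corput_Icc (zeroExtend_of_notMem z N) H
  rw [hcard, hsum, sum_Icc_comp_zeroExtend z N (‖·‖ ^ 2)] at key
  simp only [sum_Icc_zeroExtend_mul_conj, RCLike.re_to_complex] at key
  rw [div_mul_eq_mul_div, le_div_iff₀ (by positivity)]
  linarith

/-- Van der Corput inequality (Lemma `diff-ineq`): for complex numbers
`z_1, ..., z_N` and `1 ≤ H ≤ N`,
`|∑ z_n|² ≤ ((N+H-1)/H²)(H ∑ |z_n|² + 2 ∑_{h=1}^{H-1} (H-h) Re ∑_{n=1}^{N-h} z_{n+h} conj z_n)`. -/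
theorem stmt0 (N H : ℕ) (hH : 1 ≤ H) (hHN : H ≤ N) (z : ℕ → ℂ) :
    ‖∑ n ∈ Finset.Icc 1 N, z n‖ ^ 2 ≤
      (((N : ℝ) + H - 1) / H ^ 2) *
        (H * ∑ n ∈ Finset.Icc 1 N, ‖z n‖ ^ 2
          + 2 * ∑ h ∈ Finset.Icc 1 (H - 1),
              ((H : ℝ) - h) *
                (∑ n ∈ Finset.Icc 1 (N - h), z (n + h) * (starRingEnd ℂ) (z n)).re) :=
  stmt0_general N H hH z
end

section
/- Let k ≥ d+2 ≥ 3 be integers and let C_{k,d+1} be the set of (y_0,...,y_d) ∈ ℝ^{d+1} with 0 ≤ y_0 < 1 and 0 ≤ ∑_{i=0}^{d} C(j,i)·y_i < 1 for all integers j with 1 ≤ j ≤ k-1, where C(j,i) denotes the binomial coefficient. Then the Lebesgue measure of C_{k,d+1} is at least 1/∏_{i=1}^{d} C(k-1,i). -/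
/-!
A point `y` of `C_{k,d+1}` is the coefficient vector of `p(x) = ∑ i, y i * C(x, i)`, a polynomial
of degree `≤ d` with `p(j) ∈ [0, 1)` for `j = 0, …, K`, where `K = k - 1`. The hypergeometric
weights `q_m(x) = C(x, m) C(K - x, d - m) / C(K, d)`, `m = 0, …, d`, are polynomials of degree `d`
that are nonnegative and sum to `1` on `{0, …, K}` (Vandermonde), so `∑ m, t m * q_m` lies in the
region for every `t ∈ [0, 1)^(d+1)`. By Newton's forward-difference formula the binomial
coefficients of `q_m` are `Δᵏ q_m (0)`, so `t` is mapped to the region linearly. The map is lower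
triangular since `q_m` vanishes at `0, …, m - 1`, with diagonal entries
`q_m(m) = C(K - m, d - m) / C(K, d) ≥ 1 / C(K, m)`; the image of the unit cube therefore has volume
at least `∏ m, 1 / C(K, m)`.
-/

open Finset MeasureTheory Polynomial Function fwdDiff Matrix
open scoped Nat

section Newton

variable {M G : Type*} [AddCommMonoid M] [AddCommGroup G] (h : M)

theorem shift_eq_sum_fwdDiff_iter_of_fwdDiff_iter_eq_zero {f : M → G} {y : M} {d : ℕ}
    (hf : ∀ k, d < k → Δ_[h] ^[k] f y = 0) (j : ℕ) :
    f (y + j • h) = ∑ k ∈ range (d + 1), j.choose k • Δ_[h] ^[k] f y := by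
  rw [shift_eq_sum_fwdDiff_iter h f j y]
  have hj : range (j + 1) ⊆ range (j + d + 1) := range_subset_range.2 (by omega)
  have hd : range (d + 1) ⊆ range (j + d + 1) := range_subset_range.2 (by omega)
  rw [sum_subset hj, sum_subset hd]
  · intro k _ hk
    rw [hf k (by simpa using hk), smul_zero]
  · intro k _ hk
    rw [Nat.choose_eq_zero_of_lt (by simpa using hk), zero_smul]

theorem fwdDiff_iter_eq_of_shift_eq_zero {f : M → G} {y : M} {n : ℕ}
    (hf : ∀ l < n, f (y + l • h) = 0) : Δ_[h] ^[n] f y = f (y + n • h) := by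
  rw [fwdDiff_iter_eq_sum_shift, sum_range_succ, sum_eq_zero fun l hl ↦ by
    rw [hf l (mem_range.1 hl), smul_zero]]
  simp

end Newton

theorem Polynomial.eval_natCast_eq_sum_choose_mul_fwdDiff_iter {R : Type*} [CommRing R]
    {P : R[X]} {d : ℕ} (hP : P.natDegree ≤ d) (j : ℕ) :
    P.eval (j : R) = ∑ k ∈ range (d + 1), (j.choose k : R) * Δ_[1] ^[k] P.eval 0 := by
  have := shift_eq_sum_fwdDiff_iter_of_fwdDiff_iter_eq_zero (1 : R) (f := P.eval) (y := 0)
    (fun k hk ↦ congrFun (fwdDiff_iter_eq_zero_of_degree_lt (hP.trans_lt hk)) 0) j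
  simpa [nsmul_eq_mul] using this

/-- `descPochhammer` turns the hypergeometric weight `C(x, m) C(K - x, d - m) / C(K, d)` into a
polynomial in `x`. -/
noncomputable def hypergeomWeight (K d m : ℕ) : ℝ[X] :=
  C ((K.choose d * m ! * (d - m)! : ℕ) : ℝ)⁻¹ *
    (descPochhammer ℝ m * (descPochhammer ℝ (d - m)).comp (C (K : ℝ) - X))

theorem natDegree_hypergeomWeight_le {K d m : ℕ} (hm : m ≤ d) :
    (hypergeomWeight K d m).natDegree ≤ d := by
  unfold hypergeomWeight
  refine (natDegree_C_mul_le _ _).trans (natDegree_mul_le.trans ?_)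
  rw [natDegree_comp, descPochhammer_natDegree, descPochhammer_natDegree]
  have : (C (K : ℝ) - X).natDegree ≤ 1 := natDegree_sub_le_of_le (natDegree_C _).le natDegree_X_le
  calc m + (d - m) * (C (K : ℝ) - X).natDegree ≤ m + (d - m) * 1 := by gcongr
    _ = d := by omega

theorem hypergeomWeight_eval_natCast {K d m j : ℕ} (hj : j ≤ K) :
    (hypergeomWeight K d m).eval (j : ℝ) =
      (j.choose m * (K - j).choose (d - m) : ℕ) / K.choose d := by
  rw [hypergeomWeight, eval_mul, eval_C, eval_mul, eval_comp, eval_sub, eval_C, eval_X,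
    ← Nat.cast_sub hj, descPochhammer_eval_eq_descFactorial, descPochhammer_eval_eq_descFactorial,
    Nat.descFactorial_eq_factorial_mul_choose, Nat.descFactorial_eq_factorial_mul_choose]
  push_cast
  field_simp

theorem hypergeomWeight_eval_natCast_of_lt {K d m l : ℕ} (hl : l < m) :
    (hypergeomWeight K d m).eval (l : ℝ) = 0 := by
  simp [hypergeomWeight, descPochhammer_eval_eq_descFactorial,
    Nat.descFactorial_eq_zero_iff_lt.2 hl]

theorem sum_hypergeomWeight_eval_natCast {K d j : ℕ} (hdK : d ≤ K) (hj : j ≤ K) :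
    ∑ m ∈ range (d + 1), (hypergeomWeight K d m).eval (j : ℝ) = 1 := by
  have hvandermonde := Nat.add_choose_eq j (K - j) d
  rw [Nat.add_sub_cancel' hj, Nat.sum_antidiagonal_eq_sum_range_succ_mk] at hvandermonde
  simp_rw [hypergeomWeight_eval_natCast hj, ← sum_div, ← Nat.cast_sum, ← hvandermonde]
  exact div_self (Nat.cast_ne_zero.2 (Nat.choose_pos hdK).ne')

theorem Nat.choose_le_choose_mul_choose_sub {n d m : ℕ} (hmd : m ≤ d) :
    n.choose d ≤ n.choose m * (n - m).choose (d - m) := by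
  rw [← Nat.choose_mul hmd]
  exact Nat.le_mul_of_pos_right _ (Nat.choose_pos hmd)

/-- The paper's `C_{K+1,d+1}`; the constraint for `j = 0` is `0 ≤ y 0 < 1`. -/
def binomialBody (K d : ℕ) : Set (Fin (d + 1) → ℝ) :=
  {y | ∀ j ≤ K, ∑ i : Fin (d + 1), (j.choose i : ℝ) * y i ∈ Set.Ico 0 1}

/-- Column `m` holds the coefficients of `hypergeomWeight K d m` in the basis `x ↦ C(x, k)`. -/
noncomputable def hypergeomMatrix (K d : ℕ) : Matrix (Fin (d + 1)) (Fin (d + 1)) ℝ :=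
  Matrix.of fun k m ↦ Δ_[1] ^[k] (hypergeomWeight K d m).eval 0

section hypergeomMatrix

variable {K d : ℕ}

theorem sum_choose_mul_hypergeomMatrix_mulVec (t : Fin (d + 1) → ℝ) (j : ℕ) :
    ∑ i : Fin (d + 1), (j.choose i : ℝ) * (hypergeomMatrix K d *ᵥ t) i =
      ∑ m, t m * (hypergeomWeight K d m).eval (j : ℝ) := by
  simp only [Matrix.mulVec, dotProduct, mul_sum]
  rw [sum_comm]
  refine sum_congr rfl fun m _ ↦ ?_
  rw [eval_natCast_eq_sum_choose_mul_fwdDiff_iter (natDegree_hypergeomWeight_le m.is_le) j,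
    ← Fin.sum_univ_eq_sum_range, mul_sum]
  refine sum_congr rfl fun i _ ↦ ?_
  simp only [hypergeomMatrix, Matrix.of_apply]
  ring

theorem mapsTo_hypergeomMatrix_mulVec (hdK : d ≤ K) :
    Set.MapsTo (hypergeomMatrix K d *ᵥ ·) (Set.univ.pi fun _ ↦ Set.Ico 0 1)
      (binomialBody K d) := by
  intro t ht j hj
  have hweights := sum_hypergeomWeight_eval_natCast hdK hj
  rw [← Fin.sum_univ_eq_sum_range (fun m ↦ (hypergeomWeight K d m).eval (j : ℝ))] at hweights
  rw [sum_choose_mul_hypergeomMatrix_mulVec]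
  simp_rw [mul_comm (t _), ← smul_eq_mul]
  refine (convex_Ico 0 1).sum_mem (fun m _ ↦ ?_) hweights (fun m _ ↦ ht m (Set.mem_univ m))
  rw [hypergeomWeight_eval_natCast hj]
  positivity

theorem hypergeomMatrix_isLowerTriangular : (hypergeomMatrix K d).IsLowerTriangular := by
  intro k m (hkm : k < m)
  simp only [hypergeomMatrix, Matrix.of_apply]
  rw [fwdDiff_iter_eq_of_shift_eq_zero]
  all_goals simp only [zero_add, nsmul_one]
  · exact hypergeomWeight_eval_natCast_of_lt hkm
  · exact fun l hl ↦ hypergeomWeight_eval_natCast_of_lt (hl.trans hkm)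

theorem hypergeomMatrix_apply_self (hdK : d ≤ K) (m : Fin (d + 1)) :
    hypergeomMatrix K d m m = ((K - m).choose (d - m) : ℝ) / K.choose d := by
  simp only [hypergeomMatrix, Matrix.of_apply]
  rw [fwdDiff_iter_eq_of_shift_eq_zero]
  all_goals simp only [zero_add, nsmul_one]
  · rw [hypergeomWeight_eval_natCast (by omega), Nat.choose_self, one_mul]
  · exact fun l hl ↦ hypergeomWeight_eval_natCast_of_lt hl

theorem inv_prod_choose_le_det_hypergeomMatrix (hdK : d ≤ K) :
    (∏ i ∈ Icc 1 d, (K.choose i : ℝ))⁻¹ ≤ (hypergeomMatrix K d).det := by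
  rw [Matrix.det_of_isLowerTriangular _ hypergeomMatrix_isLowerTriangular]
  simp_rw [hypergeomMatrix_apply_self hdK]
  rw [Fin.prod_univ_eq_prod_range (fun m ↦ ((K - m).choose (d - m) : ℝ) / K.choose d)]
  have hprod : ∏ m ∈ range (d + 1), (K.choose m : ℝ) = ∏ i ∈ Icc 1 d, (K.choose i : ℝ) := by
    rw [range_eq_Ico, prod_eq_prod_Ico_succ_bot d.succ_pos, zero_add, Nat.succ_eq_add_one,
      Ico_add_one_right_eq_Icc, Nat.choose_zero_right, Nat.cast_one, one_mul]
  rw [← hprod, ← prod_inv_distrib]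
  refine prod_le_prod (fun m _ ↦ by positivity) fun m hm ↦ ?_
  have hmK : 0 < K.choose m := Nat.choose_pos (by have := mem_range.1 hm; omega)
  rw [inv_eq_one_div, div_le_div_iff₀ (by exact_mod_cast hmK)
    (by exact_mod_cast Nat.choose_pos hdK), one_mul, mul_comm]
  exact_mod_cast Nat.choose_le_choose_mul_choose_sub (Nat.lt_succ_iff.1 (mem_range.1 hm))

end hypergeomMatrix

theorem inv_prod_choose_le_volume_binomialBody {K d : ℕ} (hdK : d ≤ K) :
    (∏ i ∈ Icc 1 d, (K.choose i : ENNReal))⁻¹ ≤ volume (binomialBody K d) := by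
  have hdet := inv_prod_choose_le_det_hypergeomMatrix hdK
  have hprod_pos : 0 < ∏ i ∈ Icc 1 d, (K.choose i : ℝ) :=
    prod_pos fun i hi ↦ Nat.cast_pos.2 (Nat.choose_pos ((mem_Icc.1 hi).2.trans hdK))
  have hdet_nonneg : 0 ≤ (hypergeomMatrix K d).det := (inv_pos.2 hprod_pos).le.trans hdet
  have hcube : volume (Set.univ.pi fun _ : Fin (d + 1) ↦ Set.Ico (0 : ℝ) 1) = 1 := by
    simp [Real.volume_pi_Ico]
  calc (∏ i ∈ Icc 1 d, (K.choose i : ENNReal))⁻¹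
      = ENNReal.ofReal (∏ i ∈ Icc 1 d, (K.choose i : ℝ))⁻¹ := by
        rw [ENNReal.ofReal_inv_of_pos hprod_pos, ENNReal.ofReal_prod_of_nonneg (by simp)]
        simp
    _ ≤ ENNReal.ofReal (hypergeomMatrix K d).det := ENNReal.ofReal_le_ofReal hdet
    _ = volume (toLin' (hypergeomMatrix K d) '' Set.univ.pi fun _ ↦ Set.Ico 0 1) := by
        rw [Measure.addHaar_image_linearMap, LinearMap.det_toLin', hcube, mul_one,
          abs_of_nonneg hdet_nonneg]
    _ ≤ volume (binomialBody K d) :=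
        measure_mono (mapsTo_hypergeomMatrix_mulVec hdK).image_subset

theorem stmt1_general (d k : ℕ) (hk : d + 2 ≤ k) :
    (1 : ENNReal) / ∏ i ∈ Finset.Icc 1 d, ((k - 1).choose i : ENNReal) ≤
      MeasureTheory.volume {y : Fin (d + 1) → ℝ |
        0 ≤ y 0 ∧ y 0 < 1 ∧ ∀ j ∈ Finset.Icc 1 (k - 1),
          0 ≤ ∑ i : Fin (d + 1), (j.choose (i : ℕ) : ℝ) * y i ∧
          ∑ i : Fin (d + 1), (j.choose (i : ℕ) : ℝ) * y i < 1} := by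
  rw [one_div]
  refine (inv_prod_choose_le_volume_binomialBody (by omega)).trans (measure_mono fun y hy ↦ ?_)
  have hy0 : 0 ≤ y 0 ∧ y 0 < 1 := by simpa [Fin.sum_univ_succ] using hy 0 (Nat.zero_le _)
  exact ⟨hy0.1, hy0.2, fun j hj ↦ hy j (mem_Icc.1 hj).2⟩

/-- The Lebesgue measure of the convex set `C_{k,d+1}` is at least
`1/∏_{i=1}^d C(k-1,i)`. -/
theorem stmt1 (d k : ℕ) (hd : 1 ≤ d) (hk : d + 2 ≤ k) :
    (1 : ENNReal) / ∏ i ∈ Finset.Icc 1 d, ((k - 1).choose i : ENNReal) ≤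
      MeasureTheory.volume {y : Fin (d + 1) → ℝ |
        0 ≤ y 0 ∧ y 0 < 1 ∧ ∀ j ∈ Finset.Icc 1 (k - 1),
          0 ≤ ∑ i : Fin (d + 1), (j.choose (i : ℕ) : ℝ) * y i ∧
          ∑ i : Fin (d + 1), (j.choose (i : ℕ) : ℝ) * y i < 1} :=
  stmt1_general d k hk
end

section
/- Let k ≥ d+2 ≥ 3 be integers. Define C'_{k,d+1} = { (y_0,...,y_d) ∈ ℝ^{d+1} : 0 ≤ y_0 < 1 and 0 ≤ ∑_{i=0}^{j} C(k-1,i)·y_i < 1 for all 1 ≤ j ≤ d }. Then C'_{k,d+1} is contained in C_{k,d+1} = { (y_0,...,y_d) : 0 ≤ y_0 < 1 and 0 ≤ ∑_{i=0}^{d} C(j,i)·y_i < 1 for all 1 ≤ j ≤ k-1 }. -/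
/-!
Fix `j ≤ k - 1` and put `S_l = ∑_{i ≤ l} C(k-1,i) y_i`, so that `0 ≤ S_l < 1` for `l ≤ d`.
Since `j ≤ k - 1`, the ratios `f_l = C(j,l) / C(k-1,l)` decrease from `f_0 = 1`, and summation by
parts writes `∑_{i ≤ d} C(j,i) y_i = ∑_{i ≤ d} f_i (S_i - S_{i-1})` as the convex combination of
`S_0, …, S_d` with weights `f_l - f_{l+1}` (where `f_{d+1} := 0`); it therefore lies in `[0, 1)`.
-/

open Finset

theorem Convex.sum_range_smul_mem_of_partial_sums_mem {𝕜 E : Type*} [Field 𝕜] [LinearOrder 𝕜]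
    [IsStrictOrderedRing 𝕜] [AddCommGroup E] [Module 𝕜 E] {s : Set E} (hs : Convex 𝕜 s)
    {f : ℕ → 𝕜} {a : ℕ → E} {n : ℕ} (hf0 : f 0 = 1) (hfn : f (n + 1) = 0)
    (hf : ∀ l ≤ n, f (l + 1) ≤ f l) (ha : ∀ l ≤ n, ∑ i ∈ range (l + 1), a i ∈ s) :
    ∑ i ∈ range (n + 1), f i • a i ∈ s := by
  have by_parts : ∑ i ∈ range (n + 1), f i • a i =
      ∑ l ∈ range (n + 1), (f l - f (l + 1)) • ∑ i ∈ range (l + 1), a i := by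
    rw [sum_range_by_parts, Nat.add_sub_cancel,
      sum_range_succ (fun l => (f l - f (l + 1)) • ∑ i ∈ range (l + 1), a i), hfn, sub_zero]
    simp only [sub_smul, sum_sub_distrib]
    abel
  rw [by_parts]
  refine hs.sum_mem (fun l hl => sub_nonneg.2 (hf l (Nat.lt_succ_iff.1 (mem_range.1 hl)))) ?_
    (fun l hl => ha l (Nat.lt_succ_iff.1 (mem_range.1 hl)))
  rw [sum_range_sub' f, hf0, hfn, sub_zero]

theorem Nat.choose_succ_mul_choose_le {j m : ℕ} (l : ℕ) (hjm : j ≤ m) :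
    j.choose (l + 1) * m.choose l ≤ j.choose l * m.choose (l + 1) := by
  refine Nat.le_of_mul_le_mul_right ?_ l.succ_pos
  calc j.choose (l + 1) * m.choose l * (l + 1) = j.choose l * (j - l) * m.choose l := by
        rw [mul_right_comm, Nat.choose_succ_right_eq]
    _ ≤ j.choose l * (m - l) * m.choose l := by gcongr
    _ = j.choose l * m.choose (l + 1) * (l + 1) := by
        rw [mul_right_comm, mul_assoc, ← Nat.choose_succ_right_eq]; ring

theorem choose_succ_div_choose_succ_le {𝕜 : Type*} [Field 𝕜] [LinearOrder 𝕜]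
    [IsStrictOrderedRing 𝕜] {j m l : ℕ} (hjm : j ≤ m) (hlm : l < m) :
    (j.choose (l + 1) : 𝕜) / m.choose (l + 1) ≤ j.choose l / m.choose l := by
  rw [div_le_div_iff₀ (by exact_mod_cast Nat.choose_pos hlm)
    (by exact_mod_cast Nat.choose_pos hlm.le)]
  exact_mod_cast Nat.choose_succ_mul_choose_le l hjm

theorem sum_range_choose_mul_mem_Ico_of_partial_sums {d m j : ℕ} (hdm : d < m) (hjm : j ≤ m)
    {x : ℕ → ℝ} (hx : ∀ l ≤ d, ∑ i ∈ range (l + 1), (m.choose i : ℝ) * x i ∈ Set.Ico 0 1) :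
    ∑ i ∈ range (d + 1), (j.choose i : ℝ) * x i ∈ Set.Ico 0 1 := by
  set f : ℕ → ℝ := fun l => if l ≤ d then (j.choose l : ℝ) / m.choose l else 0
  have hf : ∀ l ≤ d, f (l + 1) ≤ f l := by
    intro l hl
    obtain hl | rfl := hl.lt_or_eq
    · simp only [f, if_pos (Nat.succ_le_of_lt hl), if_pos hl.le]
      exact choose_succ_div_choose_succ_le hjm (by omega)
    · simp only [f, if_neg (Nat.not_succ_le_self l), if_pos le_rfl]
      positivity
  have hfx : ∀ i ∈ range (d + 1), (j.choose i : ℝ) * x i = f i • ((m.choose i : ℝ) * x i) := by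
    intro i hi
    have hid : i ≤ d := Nat.lt_succ_iff.1 (mem_range.1 hi)
    have hmi : (m.choose i : ℝ) ≠ 0 := by exact_mod_cast (Nat.choose_pos (by omega)).ne'
    simp only [f, if_pos hid, smul_eq_mul]
    field_simp
  rw [sum_congr rfl hfx]
  exact (convex_Ico 0 1).sum_range_smul_mem_of_partial_sums_mem (by simp [f]) (by simp [f]) hf hx

theorem stmt2_general (d k : ℕ) (hk : d + 2 ≤ k) :
    {y : Fin (d + 1) → ℝ |
        0 ≤ y 0 ∧ y 0 < 1 ∧ ∀ j ∈ Finset.Icc 1 d,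
          0 ≤ ∑ i : Fin (d + 1), (if (i : ℕ) ≤ j then ((k - 1).choose (i : ℕ) : ℝ) else 0) * y i ∧
          ∑ i : Fin (d + 1), (if (i : ℕ) ≤ j then ((k - 1).choose (i : ℕ) : ℝ) else 0) * y i < 1}
      ⊆
    {y : Fin (d + 1) → ℝ |
        0 ≤ y 0 ∧ y 0 < 1 ∧ ∀ j ∈ Finset.Icc 1 (k - 1),
          0 ≤ ∑ i : Fin (d + 1), (j.choose (i : ℕ) : ℝ) * y i ∧
          ∑ i : Fin (d + 1), (j.choose (i : ℕ) : ℝ) * y i < 1} := by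
  rintro y ⟨hy0, hy1, hpartial⟩
  refine ⟨hy0, hy1, fun j hj => ?_⟩
  set x : ℕ → ℝ := fun i => if h : i < d + 1 then y ⟨i, h⟩ else 0
  have sum_eq : ∀ g : ℕ → ℝ, ∑ i : Fin (d + 1), g i * y i = ∑ i ∈ range (d + 1), g i * x i :=
    fun g => by rw [← Fin.sum_univ_eq_sum_range (fun i => g i * x i)]; simp [x, Fin.is_le]
  have partial_sum_mem :
      ∀ l ≤ d, ∑ i ∈ range (l + 1), ((k - 1).choose i : ℝ) * x i ∈ Set.Ico 0 1 := by
    rintro (_ | l) hl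
    · simpa [x] using ⟨hy0, hy1⟩
    · have h := hpartial (l + 1) (mem_Icc.2 ⟨l.succ_pos, hl⟩)
      have hrange : {i ∈ range (d + 1) | i ≤ l + 1} = range (l + 2) := by
        ext; simp only [mem_filter, mem_range]; omega
      rw [sum_eq fun i => if i ≤ l + 1 then ((k - 1).choose i : ℝ) else 0] at h
      simp only [ite_mul, zero_mul, ← sum_filter, hrange] at h
      exact h
  rw [sum_eq (fun i => (j.choose i : ℝ))]
  exact sum_range_choose_mul_mem_Ico_of_partial_sums (by omega) (mem_Icc.1 hj).2 partial_sum_mem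

/-- The set `C'_{k,d+1}` is contained in `C_{k,d+1}`. -/
theorem stmt2 (d k : ℕ) (hd : 1 ≤ d) (hk : d + 2 ≤ k) :
    {y : Fin (d + 1) → ℝ |
        0 ≤ y 0 ∧ y 0 < 1 ∧ ∀ j ∈ Finset.Icc 1 d,
          0 ≤ ∑ i : Fin (d + 1), (if (i : ℕ) ≤ j then ((k - 1).choose (i : ℕ) : ℝ) else 0) * y i ∧
          ∑ i : Fin (d + 1), (if (i : ℕ) ≤ j then ((k - 1).choose (i : ℕ) : ℝ) else 0) * y i < 1}
      ⊆
    {y : Fin (d + 1) → ℝ |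
        0 ≤ y 0 ∧ y 0 < 1 ∧ ∀ j ∈ Finset.Icc 1 (k - 1),
          0 ≤ ∑ i : Fin (d + 1), (j.choose (i : ℕ) : ℝ) * y i ∧
          ∑ i : Fin (d + 1), (j.choose (i : ℕ) : ℝ) * y i < 1} :=
  stmt2_general d k hk
end

section
/- Let (N_m) and (R_m) be sequences of positive integers diverging to infinity, d ≥ 0 an integer, and for each n let p_n(x) = c_n x^d + q_n(x) where q_n is a real polynomial of degree less than d. If the sequence (c_n) is uniformly distributed modulo 1, then (1/(N_m R_m)) ∑_{n=1}^{N_m} ∑_{r=1}^{R_m} e(p_n(r)) → 0 as m → ∞, where e(x) = exp(2πix). -/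
/-!
Van der Corput's inequality: if `|a n r| ≤ 1` and `H ≥ 1`, the square of the double average of
`a` is at most `2 / H + 2 δ + 8 H² / R²`, where `δ` bounds the double averages of the
correlations `a n (r + h) * conj (a n (r + h'))` with `h ≠ h' < H`. One compares the sum with the
average of its `H` shifts in `r` and expands the square by Cauchy–Schwarz.
For `a n r = e (p_n r)` with `deg p_n = d + 1` the correlation is `e (p_n (r + h) - p_n (r + h'))`,
of the same shape with degree `d` and leading coefficient `(d + 1) (h - h') c_n`, an integer
multiple of `c_n` and hence again uniformly distributed. So induction on the degree, jointly in
`(N, R) → ∞`, reduces the claim to `d = 0`, which is Weyl's criterion itself.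
-/

open Filter

/-- `e x = exp(2πix)`. -/
noncomputable def e (x : ℝ) : ℂ := Complex.exp (2 * Real.pi * Complex.I * x)

open Finset ComplexConjugate Topology

theorem norm_sum_sq_le_card_mul {ι E : Type*} [SeminormedAddCommGroup E] (s : Finset ι)
    (z : ι → E) : ‖∑ i ∈ s, z i‖ ^ 2 ≤ #s * ∑ i ∈ s, ‖z i‖ ^ 2 :=
  (pow_le_pow_left₀ (norm_nonneg _) (norm_sum_le _ _) 2).trans (sq_sum_le_card_mul_sum_sq ..)

theorem sum_norm_sum_sq {ι κ : Type*} (s : Finset ι) (t : Finset κ) (z : κ → ι → ℂ) :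
    ((∑ i ∈ s, ‖∑ h ∈ t, z h i‖ ^ 2 : ℝ) : ℂ) =
      ∑ h ∈ t, ∑ h' ∈ t, ∑ i ∈ s, z h i * conj (z h' i) := by
  push_cast
  simp_rw [← Complex.mul_conj', map_sum, sum_mul_sum]
  rw [sum_comm]
  exact sum_congr rfl fun _ _ => sum_comm

theorem norm_sum_Icc_add_sub_sum_le (f : ℕ → ℂ) (hf : ∀ r, ‖f r‖ ≤ 1) (R h : ℕ) :
    ‖∑ r ∈ Icc 1 R, f (r + h) - ∑ r ∈ Icc 1 R, f r‖ ≤ 2 * h := by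
  have hIoc (u v : ℕ) : ‖∑ r ∈ Ioc u (u + v), f r‖ ≤ v :=
    (norm_sum_le_of_le _ fun r _ => hf r).trans (by simp)
  have hshift : ∑ r ∈ Ioc 0 R, f (r + h) = ∑ r ∈ Ioc (0 + h) (R + h), f r := by
    rw [← map_add_right_Ioc, sum_map]; rfl
  have hsplit : ∑ r ∈ Ioc 0 R, f (r + h) - ∑ r ∈ Ioc 0 R, f r =
      ∑ r ∈ Ioc R (R + h), f r - ∑ r ∈ Ioc 0 (0 + h), f r := by
    rw [hshift, zero_add]
    linear_combination sum_Ioc_consecutive f h.zero_le (Nat.le_add_left h R) -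
      sum_Ioc_consecutive f R.zero_le (Nat.le_add_right R h)
  rw [← Icc_add_one_left_eq_Ioc, zero_add] at hsplit
  rw [hsplit, two_mul]
  exact (norm_sub_le _ _).trans (add_le_add (hIoc R h) (hIoc 0 h))

namespace Polynomial

theorem coeff_taylor_of_natDegree_le_succ {R : Type*} [CommSemiring R] {p : R[X]} {k : ℕ}
    (hp : p.natDegree ≤ k + 1) (a : R) :
    (taylor a p).coeff k = p.coeff k + (k + 1) * p.coeff (k + 1) * a := by
  have hasse : hasseDeriv k p = C (p.coeff k) + C ((k + 1) * p.coeff (k + 1)) * X := by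
    ext (_ | _ | j)
    · simp [hasseDeriv_coeff]
    · simp [hasseDeriv_coeff, add_comm 1 k]
    · have : p.coeff (j + 2 + k) = 0 := coeff_eq_zero_of_natDegree_lt (by omega)
      simp [hasseDeriv_coeff, this, coeff_one]
  rw [taylor_coeff, hasse]
  simp

theorem degree_taylor_sub_taylor_sub_lt {R : Type*} [CommRing R] {p : R[X]} {d : ℕ}
    (hp : p.natDegree ≤ d + 1) (a b : R) :
    (taylor a p - taylor b p - C ((d + 1) * p.coeff (d + 1) * (a - b)) * X ^ d).degree <
      (d : WithBot ℕ) := by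
  rw [degree_lt_iff_coeff_zero]
  intro m hm
  replace hm : d ≤ m := by exact_mod_cast hm
  simp only [coeff_sub, coeff_C_mul_X_pow,
    coeff_taylor_of_natDegree_le_succ (hp.trans (by omega : d + 1 ≤ m + 1))]
  rcases hm.eq_or_lt with rfl | hlt
  · simp only [if_true]; ring
  · have : p.coeff (m + 1) = 0 := coeff_eq_zero_of_natDegree_lt (by omega)
    simp [this, hlt.ne']

end Polynomial

theorem norm_e (x : ℝ) : ‖e x‖ = 1 := by
  simp [e, Complex.norm_exp]

theorem e_mul_conj_e (x y : ℝ) : e x * conj (e y) = e (x - y) := by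
  simp only [e, ← Complex.exp_conj, ← Complex.exp_add, map_mul, Complex.conj_I,
    Complex.conj_ofReal, map_ofNat, Complex.ofReal_sub]
  ring_nf

/-- Weyl's criterion, taken as the definition. -/
def UniformlyDistributedModOne (c : ℕ → ℝ) : Prop :=
  ∀ h : ℤ, h ≠ 0 → Tendsto (fun M : ℕ => (M : ℂ)⁻¹ * ∑ n ∈ Icc 1 M, e (h * c n)) atTop (𝓝 0)

theorem UniformlyDistributedModOne.int_mul {c : ℕ → ℝ} (hc : UniformlyDistributedModOne c)
    {k : ℤ} (hk : k ≠ 0) : UniformlyDistributedModOne fun n => k * c n := fun h hh => by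
  simpa [mul_assoc] using hc (h * k) (mul_ne_zero hh hk)

noncomputable def doubleAverage (a : ℕ → ℕ → ℂ) (N R : ℕ) : ℂ :=
  ((N : ℂ) * (R : ℂ))⁻¹ * ∑ n ∈ Icc 1 N, ∑ r ∈ Icc 1 R, a n r

theorem sum_sum_eq_mul_doubleAverage (a : ℕ → ℕ → ℂ) (N R : ℕ) :
    ∑ n ∈ Icc 1 N, ∑ r ∈ Icc 1 R, a n r = (N * R : ℂ) * doubleAverage a N R := by
  rcases eq_or_ne ((N : ℂ) * R) 0 with hNR | hNR
  · rcases mul_eq_zero.1 hNR with hN | hR <;> simp_all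
  · rw [doubleAverage, mul_inv_cancel_left₀ hNR]

section VanDerCorput

variable (a : ℕ → ℕ → ℂ)

theorem norm_sum_sum_shifts_sq_le (ha : ∀ n r, ‖a n r‖ ≤ 1) {N R H : ℕ} {δ : ℝ}
    (hδ : 0 ≤ δ)
    (hcorr : ∀ h ∈ range H, ∀ h' ∈ range H, h ≠ h' →
      ‖doubleAverage (fun n r => a n (r + h) * conj (a n (r + h'))) N R‖ ≤ δ) :
    ‖∑ n ∈ Icc 1 N, ∑ r ∈ Icc 1 R, ∑ h ∈ range H, a n (r + h)‖ ^ 2 ≤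
      ((N * R) ^ 2 * (H + H ^ 2 * δ) : ℝ) := by
  have hU : ∀ h ∈ range H, ∀ h' ∈ range H,
      ‖∑ n ∈ Icc 1 N, ∑ r ∈ Icc 1 R, a n (r + h) * conj (a n (r + h'))‖ ≤
        N * R * ((if h = h' then 1 else 0) + δ) := by
    intro h hh h' hh'
    by_cases hdiag : h = h'
    · subst hdiag
      rw [if_pos rfl]
      calc _ ≤ ∑ n ∈ Icc 1 N, ∑ r ∈ Icc 1 R, (1 : ℝ) := by
            refine (norm_sum_le _ _).trans <| sum_le_sum fun n _ =>
              (norm_sum_le _ _).trans <| sum_le_sum fun r _ => ?_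
            rw [norm_mul, Complex.norm_conj]
            exact mul_le_one₀ (ha _ _) (norm_nonneg _) (ha _ _)
        _ ≤ _ := by
            simpa using le_mul_of_one_le_right (by positivity : (0 : ℝ) ≤ N * R)
              (by linarith : (1 : ℝ) ≤ 1 + δ)
    · rw [sum_sum_eq_mul_doubleAverage, norm_mul, if_neg hdiag, zero_add]
      simpa using mul_le_mul_of_nonneg_left (hcorr h hh h' hh' hdiag) (by positivity)
  have hsq : ∑ n ∈ Icc 1 N, ∑ r ∈ Icc 1 R, ‖∑ h ∈ range H, a n (r + h)‖ ^ 2 ≤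
      N * R * (H + H ^ 2 * δ) := by
    have hexpand := sum_norm_sum_sq (Icc 1 N ×ˢ Icc 1 R) (range H) fun h x => a x.1 (x.2 + h)
    simp only [sum_product] at hexpand
    calc _ = ‖((∑ n ∈ Icc 1 N, ∑ r ∈ Icc 1 R, ‖∑ h ∈ range H, a n (r + h)‖ ^ 2 : ℝ) : ℂ)‖ := by
          rw [Complex.norm_real, Real.norm_of_nonneg (by positivity)]
      _ ≤ ∑ h ∈ range H, ∑ h' ∈ range H, (N * R * ((if h = h' then 1 else 0) + δ) : ℝ) := by
          rw [hexpand]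
          exact norm_sum_le_of_le _ fun h hh => norm_sum_le_of_le _ fun h' hh' => hU h hh h' hh'
      _ = N * R * (H + H ^ 2 * δ) := by
          simp only [← mul_sum, sum_add_distrib, sum_ite_eq, sum_const, card_range, mem_range]
          rw [sum_ite_of_true fun _ => mem_range.1, sum_const, card_range, nsmul_eq_mul]
          ring
  calc ‖∑ n ∈ Icc 1 N, ∑ r ∈ Icc 1 R, ∑ h ∈ range H, a n (r + h)‖ ^ 2
      ≤ (N * R) * ∑ n ∈ Icc 1 N, ∑ r ∈ Icc 1 R, ‖∑ h ∈ range H, a n (r + h)‖ ^ 2 := by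
        rw [← sum_product' (Icc 1 N) (Icc 1 R) (fun n r => ∑ h ∈ range H, a n (r + h)),
          ← sum_product' (Icc 1 N) (Icc 1 R) (fun n r => ‖∑ h ∈ range H, a n (r + h)‖ ^ 2)]
        simpa using norm_sum_sq_le_card_mul (Icc 1 N ×ˢ Icc 1 R)
          fun x => ∑ h ∈ range H, a x.1 (x.2 + h)
    _ ≤ (N * R) * (N * R * (H + H ^ 2 * δ)) := by gcongr
    _ = _ := by ring

theorem norm_doubleAverage_sq_le (ha : ∀ n r, ‖a n r‖ ≤ 1) {N R H : ℕ} (hH : 0 < H) {δ : ℝ}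
    (hδ : 0 ≤ δ)
    (hcorr : ∀ h ∈ range H, ∀ h' ∈ range H, h ≠ h' →
      ‖doubleAverage (fun n r => a n (r + h) * conj (a n (r + h'))) N R‖ ≤ δ) :
    ‖doubleAverage a N R‖ ^ 2 ≤ 2 / H + 2 * δ + 8 * H ^ 2 / R ^ 2 := by
  rcases Nat.eq_zero_or_pos N with rfl | hN
  · simp [doubleAverage]; positivity
  rcases Nat.eq_zero_or_pos R with rfl | hR
  · simp [doubleAverage]; positivity
  set A := doubleAverage a N R
  set W := ∑ n ∈ Icc 1 N, ∑ r ∈ Icc 1 R, ∑ h ∈ range H, a n (r + h)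
  have hshift : ‖(H : ℂ) * (N * R * A) - W‖ ≤ 2 * N * H ^ 2 := by
    have hdiff : (H : ℂ) * (N * R * A) - W = ∑ n ∈ Icc 1 N, ∑ h ∈ range H,
        (∑ r ∈ Icc 1 R, a n r - ∑ r ∈ Icc 1 R, a n (r + h)) := by
      simp only [A, W, ← sum_sum_eq_mul_doubleAverage, mul_sum, sum_sub_distrib, sum_const,
        card_range, nsmul_eq_mul]
      exact congrArg _ (sum_congr rfl fun n _ => sum_comm)
    calc _ ≤ ∑ n ∈ Icc 1 N, ∑ h ∈ range H, (2 * H : ℝ) := by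
          rw [hdiff]
          refine norm_sum_le_of_le _ fun n _ => norm_sum_le_of_le _ fun h hh => ?_
          rw [norm_sub_rev]
          refine (norm_sum_Icc_add_sub_sum_le _ (ha n) R h).trans ?_
          gcongr
          exact (mem_range.1 hh).le
      _ = 2 * N * H ^ 2 := by simp; ring
  have hA : H * (N * R) * ‖A‖ ≤ ‖W‖ + 2 * N * H ^ 2 := by
    have := norm_sub_norm_le ((H : ℂ) * (N * R * A)) W
    simp only [norm_mul, Complex.norm_natCast] at this
    linarith
  have hW : ‖W‖ ^ 2 ≤ _ := norm_sum_sum_shifts_sq_le a ha hδ hcorr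
  have hsq : (H * (N * R) * ‖A‖) ^ 2 ≤
      2 * ((N * R) ^ 2 * (H + H ^ 2 * δ)) + 2 * (2 * N * H ^ 2) ^ 2 :=
    calc _ ≤ (‖W‖ + 2 * N * H ^ 2) ^ 2 := pow_le_pow_left₀ (by positivity) hA 2
      _ ≤ 2 * ‖W‖ ^ 2 + 2 * (2 * N * H ^ 2) ^ 2 := by
          nlinarith [sq_nonneg (‖W‖ - 2 * N * H ^ 2)]
      _ ≤ _ := by gcongr
  rw [show (2 / H + 2 * δ + 8 * H ^ 2 / R ^ 2 : ℝ) =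
      (2 * ((N * R) ^ 2 * (H + H ^ 2 * δ)) + 2 * (2 * N * H ^ 2) ^ 2) / (H * (N * R)) ^ 2 by
        field_simp; ring, le_div_iff₀ (by positivity)]
  linarith

theorem tendsto_doubleAverage_of_tendsto_correlations (ha : ∀ n r, ‖a n r‖ ≤ 1)
    (hcorr : ∀ h h', h ≠ h' → Tendsto (fun p : ℕ × ℕ =>
      doubleAverage (fun n r => a n (r + h) * conj (a n (r + h'))) p.1 p.2)
        (atTop ×ˢ atTop) (𝓝 0)) :
    Tendsto (fun p : ℕ × ℕ => doubleAverage a p.1 p.2) (atTop ×ˢ atTop) (𝓝 0) := by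
  rw [NormedAddGroup.tendsto_nhds_zero]
  intro ε hε
  obtain ⟨H, hH⟩ := exists_nat_gt (6 / ε ^ 2)
  have hH0 : (0 : ℝ) < H := (by positivity : (0 : ℝ) < 6 / ε ^ 2).trans hH
  have hcorr_small : ∀ᶠ p : ℕ × ℕ in atTop ×ˢ atTop, ∀ h ∈ range H, ∀ h' ∈ range H, h ≠ h' →
      ‖doubleAverage (fun n r => a n (r + h) * conj (a n (r + h'))) p.1 p.2‖ ≤ ε ^ 2 / 6 := by
    simp only [eventually_all_finset]
    intro h _ h' _
    by_cases hdiag : h = h'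
    · exact Eventually.of_forall fun _ hne => absurd hdiag hne
    · filter_upwards [NormedAddGroup.tendsto_nhds_zero.1 (hcorr h h' hdiag) (ε ^ 2 / 6)
        (by positivity)] with p hp _ using hp.le
  have hR_large :
      ∀ᶠ p : ℕ × ℕ in atTop ×ˢ atTop, 8 * (H : ℝ) ^ 2 / (p.2 : ℝ) ^ 2 < ε ^ 2 / 3 := by
    have : Tendsto (fun R : ℕ => 8 * (H : ℝ) ^ 2 / (R : ℝ) ^ 2) atTop (𝓝 0) :=
      tendsto_const_nhds.div_atTop
        ((tendsto_pow_atTop two_ne_zero).comp tendsto_natCast_atTop_atTop)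
    exact tendsto_snd.eventually (this.eventually (gt_mem_nhds (by positivity)))
  filter_upwards [hcorr_small, hR_large] with p hp hpR
  have hvdc := norm_doubleAverage_sq_le a ha (Nat.cast_pos.1 hH0) (by positivity) hp
  have h2H : 2 / (H : ℝ) < ε ^ 2 / 3 := by
    rw [div_lt_iff₀ hH0]
    rw [div_lt_iff₀ (by positivity)] at hH
    linarith
  exact lt_of_pow_lt_pow_left₀ 2 hε.le (by linarith)

end VanDerCorput

open Polynomial in
theorem tendsto_doubleAverage_e_eval (d : ℕ) {c : ℕ → ℝ} {q : ℕ → ℝ[X]}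
    (hq : ∀ n, (q n).degree < d) (hc : UniformlyDistributedModOne c) :
    Tendsto (fun p : ℕ × ℕ =>
      doubleAverage (fun n r => e (c n * (r : ℝ) ^ d + (q n).eval (r : ℝ))) p.1 p.2)
      (atTop ×ˢ atTop) (𝓝 0) := by
  induction d generalizing c q with
  | zero =>
    have hq0 (n : ℕ) : q n = 0 := degree_eq_bot.1 (Nat.WithBot.lt_zero_iff.1 (hq n))
    simp only [hq0, eval_zero, pow_zero, mul_one, add_zero]
    refine ((hc 1 one_ne_zero).comp tendsto_fst).congr' ?_
    filter_upwards [tendsto_snd.eventually (eventually_gt_atTop 0)] with p hp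
    have hp' : (p.2 : ℂ) ≠ 0 := by exact_mod_cast hp.ne'
    simp only [Function.comp_apply, Int.cast_one, one_mul, doubleAverage, sum_const,
      Nat.card_Icc, add_tsub_cancel_right, nsmul_eq_mul, ← mul_sum, mul_inv]
    field_simp
  | succ d ih =>
    set P : ℕ → ℝ[X] := fun n => C (c n) * X ^ (d + 1) + q n
    have hP_eval (n : ℕ) (x : ℝ) : (P n).eval x = c n * x ^ (d + 1) + (q n).eval x := by
      simp [P]
    have hP_natDegree (n : ℕ) : (P n).natDegree ≤ d + 1 :=
      natDegree_add_le_of_degree_le (natDegree_C_mul_X_pow_le _ _)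
        (natDegree_le_of_degree_le (hq n).le)
    have hP_coeff (n : ℕ) : (P n).coeff (d + 1) = c n := by
      simp [P, coeff_eq_zero_of_degree_lt (hq n)]
    simp only [← hP_eval]
    refine tendsto_doubleAverage_of_tendsto_correlations _ (fun n r => (norm_e _).le) ?_
    intro h h' hne
    set k : ℤ := (d + 1) * (h - h')
    have hk : k ≠ 0 := mul_ne_zero (by positivity) (sub_ne_zero.2 (by exact_mod_cast hne))
    have hk_cast : (k : ℝ) = (d + 1) * ((h : ℝ) - h') := by push_cast [k]; ring
    set Q : ℕ → ℝ[X] := fun n => taylor (h : ℝ) (P n) - taylor (h' : ℝ) (P n) -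
      C ((d + 1) * (P n).coeff (d + 1) * ((h : ℝ) - h')) * X ^ d
    have hQ (n : ℕ) : (Q n).degree < d := degree_taylor_sub_taylor_sub_lt (hP_natDegree n) _ _
    have hdiff : (fun n r : ℕ => e ((P n).eval ((r + h : ℕ) : ℝ)) *
        conj (e ((P n).eval ((r + h' : ℕ) : ℝ)))) =
        fun n (r : ℕ) => e (k * c n * (r : ℝ) ^ d + (Q n).eval (r : ℝ)) := by
      ext n r
      simp only [e_mul_conj_e, Q, eval_sub, taylor_eval, eval_mul, eval_C, eval_X_pow, hP_coeff,
        hk_cast, Nat.cast_add]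
      ring_nf
    rw [hdiff]
    exact ih hQ (hc.int_mul hk)

/-- Lemma `lem:exp-sum`: if `(c_n)` is uniformly distributed mod 1 (Weyl criterion) and
`p_n(x) = c_n x^d + q_n(x)` with `deg q_n < d`, then the double exponential averages
`(1/(N_m R_m)) ∑_{n=1}^{N_m} ∑_{r=1}^{R_m} e(p_n(r))` tend to `0`. -/
theorem stmt8 (N R : ℕ → ℕ) (hN : Tendsto (fun m => N m) atTop atTop)
    (hR : Tendsto (fun m => R m) atTop atTop) (d : ℕ)
    (c : ℕ → ℝ) (q : ℕ → Polynomial ℝ) (hq : ∀ n, (q n).degree < (d : WithBot ℕ))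
    (hud : ∀ h : ℤ, h ≠ 0 →
      Tendsto (fun M : ℕ => (M : ℂ)⁻¹ * ∑ n ∈ Finset.Icc 1 M, e (h * c n))
        atTop (nhds 0)) :
    Tendsto (fun m : ℕ =>
        ((N m : ℂ) * (R m : ℂ))⁻¹ *
          ∑ n ∈ Finset.Icc 1 (N m), ∑ r ∈ Finset.Icc 1 (R m),
            e (c n * (r : ℝ) ^ d + (q n).eval (r : ℝ)))
      atTop (nhds 0) := by
  have h := (tendsto_doubleAverage_e_eval d hq hud).comp (hN.prodMk hR)
  rw [Function.comp_def] at h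
  exact h
end

section
/- Let α ∈ (1,2) and r a positive integer. Then there exist infinitely many N ∈ ℕ such that 0 ≤ {α·N^{α−1}} − 1/(2r) < α(α−1)(N−1)^{α−2}, where {·} denotes the fractional part. -/
/-!
Put `g n = α n^{α-1}`. By concavity of `x ↦ x^{α-1}`, the increment `g (n+1) - g n` is less than
`α(α-1) n^{α-2}`, which tends to `0`, while `g n → ∞`. So past any `M` the sequence `g` crosses
the level `k + 1/(2r)` for a suitable integer `k` with a step shorter than `1 - 1/(2r)`; at the
first term past the crossing, the fractional part lies in `[1/(2r), 1/(2r) + step)`.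
-/

open Filter Topology

lemma Real.rpow_add_one_sub_rpow_lt {p x : ℝ} (hp0 : 0 < p) (hp1 : p < 1) (hx : 0 < x) :
    (x + 1) ^ p - x ^ p < p * x ^ (p - 1) := by
  have hbern := rpow_one_add_lt_one_add_mul_self (s := x⁻¹) (by linarith [inv_pos.2 hx])
    (inv_ne_zero hx.ne') hp0 hp1
  calc (x + 1) ^ p - x ^ p = x ^ p * (1 + x⁻¹) ^ p - x ^ p := by
        rw [← Real.mul_rpow hx.le (by positivity), mul_add, mul_inv_cancel₀ hx.ne', mul_one]
    _ < x ^ p * (1 + p * x⁻¹) - x ^ p := by gcongr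
    _ = p * x ^ (p - 1) := by rw [Real.rpow_sub_one hx.ne']; ring

lemma Int.fract_sub_mem_Ico_of_crossing {x y t : ℝ} {k : ℤ} (hx : x < k + t) (hy : k + t ≤ y)
    (ht : 0 ≤ t) (hstep : y - x < 1 - t) :
    0 ≤ Int.fract y - t ∧ Int.fract y - t < y - x := by
  have hfloor : ⌊y⌋ = k := Int.floor_eq_iff.2 ⟨by linarith, by linarith⟩
  rw [Int.fract, hfloor]
  constructor <;> linarith

lemma exists_lt_le_succ_of_tendsto_atTop {g : ℕ → ℝ} (hg : Tendsto g atTop atTop) {n₀ : ℕ}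
    {c : ℝ} (hc : g n₀ < c) : ∃ n, n₀ ≤ n ∧ g n < c ∧ c ≤ g (n + 1) := by
  have hreach : ∃ m, c ≤ g (m + n₀) :=
    ((hg.comp (tendsto_add_atTop_nat n₀)).eventually_ge_atTop c).exists
  obtain ⟨m, hm, hm1⟩ := Nat.exists_not_and_succ_of_not_zero_of_exists (by simpa using hc) hreach
  exact ⟨m + n₀, by omega, not_le.1 hm, by rwa [Nat.add_right_comm]⟩

theorem exists_fract_sub_mem_Ico_of_tendsto_atTop {g d : ℕ → ℝ} {t : ℝ} (ht : 0 ≤ t)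
    (hg : Tendsto g atTop atTop) (hd : ∀ᶠ n in atTop, g (n + 1) - g n < d n ∧ d n ≤ 1 - t)
    (M : ℕ) : ∃ N, M ≤ N ∧ 0 ≤ Int.fract (g (N + 1)) - t ∧ Int.fract (g (N + 1)) - t < d N := by
  obtain ⟨n₀, hn₀⟩ := eventually_atTop.1 hd
  set k : ℤ := ⌊g (max M n₀)⌋ + 1
  have hstart : g (max M n₀) < k + t := by
    have := Int.lt_floor_add_one (g (max M n₀))
    push_cast [k]
    linarith
  obtain ⟨N, hN, hlt, hle⟩ := exists_lt_le_succ_of_tendsto_atTop hg hstart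
  obtain ⟨hstep, hdN⟩ := hn₀ N (le_of_max_le_right hN)
  obtain ⟨hlo, hhi⟩ := Int.fract_sub_mem_Ico_of_crossing hlt hle ht (by linarith)
  exact ⟨N, le_of_max_le_left hN, hlo, hhi.trans hstep⟩

theorem stmt14_general (α : ℝ) (hα1 : 1 < α) (hα2 : α < 2) (r : ℕ) :
    ∀ M : ℕ, ∃ N : ℕ, M ≤ N ∧
      0 ≤ Int.fract (α * (N : ℝ) ^ (α - 1)) - 1 / (2 * r) ∧
      Int.fract (α * (N : ℝ) ^ (α - 1)) - 1 / (2 * r) < α * (α - 1) * ((N : ℝ) - 1) ^ (α - 2) := by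
  intro M
  set t : ℝ := 1 / (2 * r)
  have ht0 : 0 ≤ t := by positivity
  have ht1 : t < 1 := by
    rcases r.eq_zero_or_pos with rfl | hr
    · simp [t]
    · exact (div_lt_one (by positivity)).2 (by linarith [show (1 : ℝ) ≤ r from mod_cast hr])
  have hg : Tendsto (fun n : ℕ ↦ α * (n : ℝ) ^ (α - 1)) atTop atTop :=
    ((tendsto_rpow_atTop (by linarith)).comp tendsto_natCast_atTop_atTop).const_mul_atTop
      (by linarith)
  have hd : Tendsto (fun n : ℕ ↦ α * (α - 1) * (n : ℝ) ^ (α - 2)) atTop (𝓝 0) := by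
    simpa [Function.comp_def] using
      ((tendsto_rpow_neg_atTop (y := 2 - α) (by linarith)).comp
        tendsto_natCast_atTop_atTop).const_mul (α * (α - 1))
  have hstep : ∀ᶠ n : ℕ in atTop,
      α * ((n + 1 : ℕ) : ℝ) ^ (α - 1) - α * (n : ℝ) ^ (α - 1) < α * (α - 1) * (n : ℝ) ^ (α - 2)
        ∧ α * (α - 1) * (n : ℝ) ^ (α - 2) ≤ 1 - t := by
    filter_upwards [eventually_ge_atTop 1,
      (hd.eventually_lt_const (show (0 : ℝ) < 1 - t by linarith)).mono fun _ h ↦ h.le]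
      with n hn hsmall
    refine ⟨?_, hsmall⟩
    have hinc := Real.rpow_add_one_sub_rpow_lt (p := α - 1) (by linarith) (by linarith)
      (show (0 : ℝ) < n from mod_cast hn)
    rw [show α - 1 - 1 = α - 2 by ring] at hinc
    push_cast
    linarith [mul_lt_mul_of_pos_left hinc (by linarith : (0 : ℝ) < α)]
  obtain ⟨N, hMN, hlo, hhi⟩ := exists_fract_sub_mem_Ico_of_tendsto_atTop ht0 hg hstep M
  exact ⟨N + 1, by omega, hlo, by simpa using hhi⟩

/-- Lemma `lem:lb1`: for `1 < α < 2` and `r ≥ 1`, there are infinitely many `N` with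
`0 ≤ {α N^{α-1}} - 1/(2r) < α(α-1)(N-1)^{α-2}`. -/
theorem stmt14 (α : ℝ) (hα1 : 1 < α) (hα2 : α < 2) (r : ℕ) (hr : 1 ≤ r) :
    ∀ M : ℕ, ∃ N : ℕ, M ≤ N ∧
      0 ≤ Int.fract (α * (N : ℝ) ^ (α - 1)) - 1 / (2 * r) ∧
      Int.fract (α * (N : ℝ) ^ (α - 1)) - 1 / (2 * r) < α * (α - 1) * ((N : ℝ) - 1) ^ (α - 2) :=
  stmt14_general α hα1 hα2 r
end

section
/- Let α ∈ (d, d+1) with d ≥ 1 an integer, f(x) = x^α, m₀ ≥ 1 and k ≥ d+2 an integer. Then the function g(x) := Δ_x^d f(m₀ + (k−d−1)x) − Δ_x^d f(m₀) is strictly increasing on (0,∞); here Δ_x denotes the difference operator with step x, i.e. Δ_x^d h(y) = ∑_{i=0}^{d} C(d,i)·(−1)^i·h(y + (d−i)x). -/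
/-!
Put `f y = y ^ α` and `h y = (y - m₀) f' y`. Since `∂ₓ f (m₀ + t x) = x⁻¹ h (m₀ + t x)`,
the derivative of `g` is `x⁻¹ (Δ_x^d h (m₀ + (k-d-1) x) - Δ_x^d h m₀)`, which telescopes into
`x⁻¹ ∑_{j < k-d-1} Δ_x^{d+1} h (m₀ + j x)`. By Leibniz' rule
`h^{(d+1)} y = (y - m₀) f^{(d+2)} y + (d+1) f^{(d+1)} y = (α)_{d+1} y^{α-d-2} (α y + (d+1-α) m₀)`,
which is positive for `y > 0`, and an iterated difference of order `n` of a function whose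
`n`-th derivative is positive is positive.
-/

open Finset Function

lemma fwdDiff_iter_eq_sum_choose {R : Type*} [CommRing R] (f : R → R) (s y : R) (n : ℕ) :
    (fwdDiff s)^[n] f y
      = ∑ i ∈ range (n + 1), (n.choose i : R) * (-1) ^ i * f (y + (n - i : R) * s) := by
  rw [fwdDiff_iter_eq_sum_shift, ← sum_range_reflect]
  refine sum_congr rfl fun i hi => ?_
  have hin : i ≤ n := Nat.lt_succ_iff.mp (mem_range.mp hi)
  rw [show n + 1 - 1 - i = n - i by omega, Nat.sub_sub_self hin, Nat.choose_symm hin,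
    zsmul_eq_mul, nsmul_eq_mul, Nat.cast_sub hin]
  push_cast
  ring

lemma fwdDiff_iter_add_nsmul_sub {M G : Type*} [AddCommMonoid M] [AddCommGroup G]
    (f : M → G) (s y : M) (n N : ℕ) :
    (fwdDiff s)^[n] f (y + N • s) - (fwdDiff s)^[n] f y
      = ∑ j ∈ range N, (fwdDiff s)^[n + 1] f (y + j • s) := by
  have htel := sum_range_sub (fun j => (fwdDiff s)^[n] f (y + j • s)) N
  rw [zero_smul, add_zero] at htel
  rw [← htel]
  refine sum_congr rfl fun j _ => ?_
  rw [iterate_succ_apply', fwdDiff, succ_nsmul, add_assoc]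

lemma strictMonoOn_Ioi_of_hasDerivAt_pos {f f' : ℝ → ℝ} {a : ℝ}
    (hf : ∀ t, a < t → HasDerivAt f (f' t) t) (hf' : ∀ t, a < t → 0 < f' t) :
    StrictMonoOn f (Set.Ioi a) := by
  refine strictMonoOn_of_deriv_pos (convex_Ioi a)
    (fun t ht => (hf t ht).continuousAt.continuousWithinAt) fun t ht => ?_
  rw [interior_Ioi] at ht
  rw [(hf t ht).deriv]
  exact hf' t ht

lemma hasDerivAt_fwdDiff_iter {f f' : ℝ → ℝ} {s a : ℝ} (hs : 0 ≤ s)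
    (hf : ∀ t, a < t → HasDerivAt f (f' t) t) (n : ℕ) {y : ℝ} (hy : a < y) :
    HasDerivAt ((fwdDiff s)^[n] f) ((fwdDiff s)^[n] f' y) y := by
  induction n generalizing y with
  | zero => exact hf y hy
  | succ n ih =>
    rw [iterate_succ_apply', iterate_succ_apply']
    exact ((ih (by linarith)).comp_add_const y s).sub (ih hy)

lemma fwdDiff_iter_pos_of_hasDerivAt {s a : ℝ} (hs : 0 < s) {n : ℕ} {h : ℕ → ℝ → ℝ}
    (hderiv : ∀ m < n, ∀ t, a < t → HasDerivAt (h m) (h (m + 1) t) t)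
    (hpos : ∀ t, a < t → 0 < h n t) {y : ℝ} (hy : a < y) :
    0 < (fwdDiff s)^[n] (h 0) y := by
  induction n generalizing h y with
  | zero => exact hpos y hy
  | succ n ih =>
    have hderiv' :
        ∀ t, a < t → HasDerivAt ((fwdDiff s)^[n] (h 0)) ((fwdDiff s)^[n] (h 1) t) t :=
      fun t ht => hasDerivAt_fwdDiff_iter hs.le (hderiv 0 n.succ_pos) n ht
    have hmono : StrictMonoOn ((fwdDiff s)^[n] (h 0)) (Set.Ioi a) :=
      strictMonoOn_Ioi_of_hasDerivAt_pos hderiv' fun t ht =>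
        ih (h := fun m => h (m + 1)) (fun m hm => hderiv (m + 1) (by omega)) hpos ht
    rw [iterate_succ_apply', fwdDiff, sub_pos]
    exact hmono hy (show a < y + s by linarith) (by linarith)

lemma hasDerivAt_fwdDiff_iter_affine {f f' : ℝ → ℝ} {a c x : ℝ}
    (hf : ∀ y, a ≤ y → HasDerivAt f (f' y) y) (hc : 0 ≤ c) (hx : 0 < x) (n : ℕ) :
    HasDerivAt (fun x => (fwdDiff x)^[n] f (a + c * x))
      (x⁻¹ * (fwdDiff x)^[n] (fun y => (y - a) * f' y) (a + c * x)) x := by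
  simp_rw [fwdDiff_iter_eq_sum_choose, mul_sum]
  refine HasDerivAt.fun_sum fun i hi => ?_
  have hi : (i : ℝ) ≤ n := by exact_mod_cast Nat.lt_succ_iff.mp (mem_range.mp hi)
  have hpt : a ≤ a + c * x + (n - i) * x := by nlinarith
  have hlin : HasDerivAt (fun x => a + c * x + (n - i) * x) (c + (n - i)) x := by
    simpa using
      (((hasDerivAt_id x).const_mul c).const_add a).fun_add ((hasDerivAt_id x).const_mul _)
  refine (((hf _ hpt).comp x hlin).const_mul
    ((n.choose i : ℝ) * (-1) ^ i)).congr_deriv ?_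
  field_simp
  ring

lemma hasDerivAt_iterate_deriv_rpow_const (α : ℝ) (m : ℕ) {t : ℝ} (ht : t ≠ 0) :
    HasDerivAt (deriv^[m] fun y : ℝ => y ^ α) (deriv^[m + 1] (fun y : ℝ => y ^ α) t) t := by
  rw [iterate_succ_apply']
  refine DifferentiableAt.hasDerivAt ?_
  rw [funext (Real.iter_deriv_rpow_const α · m)]
  exact (Real.differentiableAt_rpow_const_of_ne _ ht).const_mul _

lemma hasDerivAt_sub_mul_add_nat_mul {u : ℕ → ℝ → ℝ} {c t : ℝ} {m : ℕ}
    (hm : HasDerivAt (u m) (u (m + 1) t) t) (hm' : HasDerivAt (u (m + 1)) (u (m + 2) t) t) :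
    HasDerivAt (fun y => (y - c) * u (m + 1) y + m * u m y)
      ((t - c) * u (m + 2) t + (m + 1 : ℕ) * u (m + 1) t) t := by
  refine ((((hasDerivAt_id' t).sub_const c).fun_mul hm').fun_add
    (hm.const_mul (m : ℝ))).congr_deriv ?_
  push_cast
  ring

lemma sub_mul_iterate_deriv_rpow_add_pos {α c y : ℝ} {d : ℕ} (hα₁ : d < α) (hα₂ : α < d + 1)
    (hc : 0 ≤ c) (hy : 0 < y) :
    0 < (y - c) * deriv^[d + 2] (fun y : ℝ => y ^ α) y
      + (d + 1 : ℕ) * deriv^[d + 1] (fun y : ℝ => y ^ α) y := by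
  set P := (descPochhammer ℝ (d + 1)).eval α
  have hP : 0 < P := descPochhammer_pos (by push_cast; linarith)
  have hz : 0 < y ^ (α - (d + 2 : ℕ)) := Real.rpow_pos_of_pos hy _
  have hpow : y ^ (α - (d + 1 : ℕ)) = y ^ (α - (d + 2 : ℕ)) * y := by
    rw [← Real.rpow_add_one hy.ne']; push_cast; ring_nf
  rw [Real.iter_deriv_rpow_const, Real.iter_deriv_rpow_const, descPochhammer_succ_eval, hpow]
  have hlin : 0 < α * y + (d + 1 - α) * c := by
    have : 0 ≤ (d + 1 - α) * c := mul_nonneg (by linarith) hc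
    nlinarith
  calc 0 < P * y ^ (α - (d + 2 : ℕ)) * (α * y + (d + 1 - α) * c) := by positivity
    _ = _ := by push_cast; ring

lemma strictMonoOn_fwdDiff_iter_rpow_sub {α m₀ : ℝ} {d N : ℕ} (hα₁ : d < α) (hα₂ : α < d + 1)
    (hm₀ : 0 < m₀) (hN : 0 < N) :
    StrictMonoOn (fun x => (fwdDiff x)^[d] (fun y : ℝ => y ^ α) (m₀ + N * x)
      - (fwdDiff x)^[d] (fun y : ℝ => y ^ α) m₀) (Set.Ioi 0) := by
  set f : ℝ → ℝ := fun y => y ^ α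
  -- `h m` is the `m`-th derivative of `y ↦ (y - m₀) f' y`
  set h : ℕ → ℝ → ℝ := fun m y => (y - m₀) * deriv^[m + 1] f y + m * deriv^[m] f y
  have hderiv : ∀ m, ∀ t : ℝ, 0 < t → HasDerivAt (h m) (h (m + 1) t) t := fun m t ht =>
    hasDerivAt_sub_mul_add_nat_mul (u := fun m => deriv^[m] f)
      (hasDerivAt_iterate_deriv_rpow_const α m ht.ne')
      (hasDerivAt_iterate_deriv_rpow_const α (m + 1) ht.ne')
  have hf : ∀ y, m₀ ≤ y → HasDerivAt f (deriv f y) y := fun y hy =>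
    hasDerivAt_iterate_deriv_rpow_const α 0 (by linarith : 0 < y).ne'
  have hh : h 0 = fun y => (y - m₀) * deriv f y := by funext y; simp [h]
  refine strictMonoOn_Ioi_of_hasDerivAt_pos (f' := fun x =>
    x⁻¹ * ((fwdDiff x)^[d] (h 0) (m₀ + N * x) - (fwdDiff x)^[d] (h 0) m₀)) (fun x hx => ?_)
    fun x hx => mul_pos (inv_pos.mpr hx) ?_
  · have h₀ := hasDerivAt_fwdDiff_iter_affine hf le_rfl hx d
    simp only [zero_mul, add_zero] at h₀
    rw [hh, mul_sub]
    exact (hasDerivAt_fwdDiff_iter_affine hf N.cast_nonneg hx d).sub h₀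
  · rw [← nsmul_eq_mul, fwdDiff_iter_add_nsmul_sub]
    refine sum_pos (fun j _ => fwdDiff_iter_pos_of_hasDerivAt hx (fun m _ => hderiv m)
      (fun t ht => sub_mul_iterate_deriv_rpow_add_pos hα₁ hα₂ hm₀.le ht) ?_)
      (nonempty_range_iff.mpr hN.ne')
    positivity

theorem stmt18_general (d : ℕ) (α : ℝ) (hα1 : (d : ℝ) < α) (hα2 : α < d + 1)
    (m₀ : ℝ) (hm : 1 ≤ m₀) (k : ℕ) (hk : d + 2 ≤ k) :
    StrictMonoOn (fun x : ℝ =>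
        (∑ i ∈ Finset.range (d + 1),
            (d.choose i : ℝ) * (-1) ^ i * (m₀ + ((k : ℝ) - d - 1) * x + ((d : ℝ) - i) * x) ^ α)
          - ∑ i ∈ Finset.range (d + 1),
              (d.choose i : ℝ) * (-1) ^ i * (m₀ + ((d : ℝ) - i) * x) ^ α)
      (Set.Ioi 0) := by
  have hN : ((k - d - 1 : ℕ) : ℝ) = k - d - 1 := by
    rw [Nat.cast_sub (by omega), Nat.cast_sub (by omega)]; push_cast; ring
  convert strictMonoOn_fwdDiff_iter_rpow_sub hα1 hα2 (by linarith : 0 < m₀)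
    (by omega : 0 < k - d - 1) using 2 with x
  simp [fwdDiff_iter_eq_sum_choose, hN]

/-- For `f(x) = x^α` with `d < α < d+1`, `m₀ ≥ 1` and `k ≥ d+2`, the function
`g(x) = Δ_x^d f(m₀ + (k-d-1)x) − Δ_x^d f(m₀)`, where
`Δ_x^d h(y) = ∑_{i=0}^d C(d,i)(−1)^i h(y+(d−i)x)`, is strictly increasing on `(0,∞)`. -/
theorem stmt18 (d : ℕ) (hd : 1 ≤ d) (α : ℝ) (hα1 : (d : ℝ) < α) (hα2 : α < d + 1)
    (m₀ : ℝ) (hm : 1 ≤ m₀) (k : ℕ) (hk : d + 2 ≤ k) :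
    StrictMonoOn (fun x : ℝ =>
        (∑ i ∈ Finset.range (d + 1),
            (d.choose i : ℝ) * (-1) ^ i * (m₀ + ((k : ℝ) - d - 1) * x + ((d : ℝ) - i) * x) ^ α)
          - ∑ i ∈ Finset.range (d + 1),
              (d.choose i : ℝ) * (-1) ^ i * (m₀ + ((d : ℝ) - i) * x) ^ α)
      (Set.Ioi 0) :=
  stmt18_general d α hα1 hα2 m₀ hm k hk
end
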